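/- Let L and K be quantum channels given by isometries, let p ∈ [0,2], assume H_p^min(L) > 0, H_p^min(K) > 0 and H_p^min(L⊗K) > 0, and set t = H_p^min(L)/(H_p^min(L)+H_p^min(K)). For a channel M given by an isometry, write α̂_p(M) = −log B_M / H_p^min(M), where B_M = min{‖C_M‖, ‖C_M^Γ‖, ‖C_{M^c}^Γ‖, ‖(V_M V_M*)^Γ‖, ‖M(I)‖}. Then α̂_p(L⊗K) ≤ v_p(L,K)·[t·α̂_p(L) + (1−t)·α̂_p(K)]. -/

import Mathlib

/-!
Unfolding `α̂_p`, the right-hand side equals `(-log B_L - log B_K) / H_p^min(L ⊗ K)`, so it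
suffices to show `B_L · B_K ≤ B_{L⊗K}` with `B_L, B_K > 0`. Each of the five matrices defining
`B_{L⊗K}` is, after regrouping tensor factors, the Kronecker product of the corresponding matrices
for `L` and `K`: partial traces, partial transposes and Choi matrices are all compatible with
tensor products. The operator norm of a Kronecker product dominates the product of the norms
(test it on product vectors), which gives the inequality factor by factor. Positivity holds
because each of the five matrices has trace `dim D ≠ 0`.
-/

open scoped Kronecker ENNReal ComplexOrder
open Matrix Filter

noncomputable section

/-- A quantum state: a positive semidefinite matrix of trace 1. -/
def IsState {A : Type*} [Fintype A] (X : Matrix A A ℂ) : Prop :=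
  X.PosSemidef ∧ X.trace = 1

/-- The Choi matrix of a linear map between matrix algebras. -/
def choiMatrix {A B : Type*} [Fintype A] [DecidableEq A]
    (L : Matrix A A ℂ →ₗ[ℂ] Matrix B B ℂ) : Matrix (B × A) (B × A) ℂ :=
  ∑ i : A, ∑ j : A, (L (Matrix.single i j 1)) ⊗ₖ (Matrix.single i j 1)

/-- A quantum channel: a trace-preserving, completely positive linear map, the latter
meaning that its Choi matrix is positive semidefinite. -/
def IsChannel {A B : Type*} [Fintype A] [DecidableEq A] [Fintype B]
    (L : Matrix A A ℂ →ₗ[ℂ] Matrix B B ℂ) : Prop :=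
  (∀ X, (L X).trace = X.trace) ∧ (choiMatrix L).PosSemidef

/-- The p-Rényi entropy of a (Hermitian) matrix, p ∈ [0,∞]. -/
def renyiEntropy {B : Type*} [Fintype B] [DecidableEq B] (p : ℝ≥0∞)
    (X : Matrix B B ℂ) : ℝ :=
  if h : X.IsHermitian then
    if p = 0 then Real.log (Nat.card {i // h.eigenvalues i ≠ 0})
    else if p = 1 then -∑ i, h.eigenvalues i * Real.log (h.eigenvalues i)
    else if p = ⊤ then -Real.log (⨆ i, h.eigenvalues i)
    else (1 - p.toReal)⁻¹ * Real.log (∑ i, (h.eigenvalues i) ^ p.toReal)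
  else 0

/-- The minimum output p-Rényi entropy of a channel. -/
def minOutputEntropy {A B : Type*} [Fintype A] [Fintype B] [DecidableEq B] (p : ℝ≥0∞)
    (L : Matrix A A ℂ →ₗ[ℂ] Matrix B B ℂ) : ℝ :=
  ⨅ X : {X : Matrix A A ℂ // IsState X}, renyiEntropy p (L X.1)

/-- The r-fold tensor power of a linear map between matrix algebras, determined by
Kronecker products of matrix units. -/
def tensorPow {A B : Type*} [Fintype A] [DecidableEq A] [Fintype B]
    (L : Matrix A A ℂ →ₗ[ℂ] Matrix B B ℂ) (r : ℕ) :
    Matrix (Fin r → A) (Fin r → A) ℂ →ₗ[ℂ] Matrix (Fin r → B) (Fin r → B) ℂ where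
  toFun X := Matrix.of fun i j => ∑ a : Fin r → A, ∑ b : Fin r → A,
      X a b * ∏ m, L (Matrix.single (a m) (b m) 1) (i m) (j m)
  map_add' X Y := by
    ext i j
    simp [Matrix.add_apply, add_mul, Finset.sum_add_distrib]
  map_smul' c X := by
    ext i j
    simp [Matrix.smul_apply, smul_eq_mul, Finset.mul_sum, mul_assoc]

/-- The tensor product of two linear maps between matrix algebras, determined by
Kronecker products: (L ⊗ K)(X ⊗ Y) = L(X) ⊗ K(Y). -/
def channelTensor {A B C D : Type*} [Fintype A] [DecidableEq A] [Fintype B]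
    [Fintype C] [DecidableEq C] [Fintype D]
    (L : Matrix A A ℂ →ₗ[ℂ] Matrix B B ℂ) (K : Matrix C C ℂ →ₗ[ℂ] Matrix D D ℂ) :
    Matrix (A × C) (A × C) ℂ →ₗ[ℂ] Matrix (B × D) (B × D) ℂ where
  toFun X := Matrix.of fun i j => ∑ a : A × C, ∑ b : A × C,
      X a b * (L (Matrix.single a.1 b.1 1) i.1 j.1
        * K (Matrix.single a.2 b.2 1) i.2 j.2)
  map_add' X Y := by
    ext i j
    simp [Matrix.add_apply, add_mul, Finset.sum_add_distrib]
  map_smul' c X := by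
    ext i j
    simp [Matrix.smul_apply, smul_eq_mul, Finset.mul_sum, mul_assoc]

/-- The p-additivity rate of a channel. -/
def additivityRate {A B : Type*} [Fintype A] [DecidableEq A] [Fintype B] [DecidableEq B]
    (p : ℝ≥0∞) (L : Matrix A A ℂ →ₗ[ℂ] Matrix B B ℂ) : ℝ :=
  sSup {a : ℝ | a ∈ Set.Icc (0 : ℝ) 1 ∧
    a * minOutputEntropy p L ≤
      Filter.liminf (fun r : ℕ => minOutputEntropy p (tensorPow L r) / r) Filter.atTop}

/-- The operator norm (the norm induced by the ℓ² Euclidean norm) of a matrix. -/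
def opNorm {A : Type*} [Fintype A] [DecidableEq A] (M : Matrix A A ℂ) : ℝ :=
  ‖Matrix.toEuclideanCLM (𝕜 := ℂ) M‖

/-- Partial trace over the first tensor factor. -/
def ptraceFst {N K : Type*} [Fintype N] (M : Matrix (N × K) (N × K) ℂ) : Matrix K K ℂ :=
  Matrix.of fun i j => ∑ a : N, M (a, i) (a, j)

/-- Partial trace over the second tensor factor. -/
def ptraceSnd {N K : Type*} [Fintype K] (M : Matrix (N × K) (N × K) ℂ) : Matrix N N ℂ :=
  Matrix.of fun i j => ∑ b : K, M (i, b) (j, b)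

/-- Partial transposition of the second tensor factor. -/
def ptranspose {B Q : Type*} (M : Matrix (B × Q) (B × Q) ℂ) : Matrix (B × Q) (B × Q) ℂ :=
  Matrix.of fun p q => M (p.1, q.2) (q.1, p.2)

/-- The quantum channel associated to an isometry V : ℂ^d → ℂ^n ⊗ ℂ^k,
X ↦ [Tr_n ⊗ id_k](V X V*). -/
def channelOfIsometry {N K D : Type*} [Fintype N] [Fintype K] [Fintype D]
    (V : Matrix (N × K) D ℂ) : Matrix D D ℂ →ₗ[ℂ] Matrix K K ℂ where
  toFun X := ptraceFst (V * X * Vᴴ)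
  map_add' X Y := by
    ext i j
    simp [ptraceFst, Matrix.mul_add, Matrix.add_mul, Finset.sum_add_distrib]
  map_smul' c X := by
    ext i j
    simp [ptraceFst, Matrix.mul_smul, Matrix.smul_mul, Finset.mul_sum]

/-- The complementary channel associated to an isometry V : ℂ^d → ℂ^n ⊗ ℂ^k,
X ↦ [id_n ⊗ Tr_k](V X V*). -/
def compChannelOfIsometry {N K D : Type*} [Fintype N] [Fintype K] [Fintype D]
    (V : Matrix (N × K) D ℂ) : Matrix D D ℂ →ₗ[ℂ] Matrix N N ℂ where
  toFun X := ptraceSnd (V * X * Vᴴ)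
  map_add' X Y := by
    ext i j
    simp [ptraceSnd, Matrix.mul_add, Matrix.add_mul, Finset.sum_add_distrib]
  map_smul' c X := by
    ext i j
    simp [ptraceSnd, Matrix.mul_smul, Matrix.smul_mul, Finset.mul_sum]

/-- The Kronecker product of two isometries, regrouped so that the environment factors
come first and the output factors second. -/
def isometryTensor {N₁ K₁ D₁ N₂ K₂ D₂ : Type*}
    (V₁ : Matrix (N₁ × K₁) D₁ ℂ) (V₂ : Matrix (N₂ × K₂) D₂ ℂ) :
    Matrix ((N₁ × N₂) × (K₁ × K₂)) (D₁ × D₂) ℂ :=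
  Matrix.of fun p c => V₁ (p.1.1, p.2.1) c.1 * V₂ (p.1.2, p.2.2) c.2

end

noncomputable section

/-- The lower bound α̂_p(M) = −log B_M / H_p^min(M) for a quantum channel given by an
isometry, where B_M is the minimum of the five additive bounds. -/
def hatAlpha {N K D : Type*}
    [Fintype N] [DecidableEq N] [Fintype K] [DecidableEq K] [Fintype D] [DecidableEq D]
    (p : ℝ≥0∞) (V : Matrix (N × K) D ℂ) : ℝ :=
  -(Real.log (min (min (min (min
      (opNorm (choiMatrix (channelOfIsometry V)))
      (opNorm (ptranspose (choiMatrix (channelOfIsometry V)))))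
      (opNorm (ptranspose (choiMatrix (compChannelOfIsometry V)))))
      (opNorm (ptranspose (V * Vᴴ))))
      (opNorm (channelOfIsometry V 1)))) /
    minOutputEntropy p (channelOfIsometry V)

lemma ContinuousLinearMap.norm_mul_norm_le_of_forall {𝕜 E F G H : Type*} [RCLike 𝕜]
    [NormedAddCommGroup E] [NormedSpace 𝕜 E] [NormedAddCommGroup F] [NormedSpace 𝕜 F]
    [NormedAddCommGroup G] [NormedSpace 𝕜 G] [NormedAddCommGroup H] [NormedSpace 𝕜 H]
    (f : E →L[𝕜] F) (g : G →L[𝕜] H) {C : ℝ} (hC : 0 ≤ C)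
    (h : ∀ x y, ‖f x‖ * ‖g y‖ ≤ C * ‖x‖ * ‖y‖) : ‖f‖ * ‖g‖ ≤ C := by
  have hg : ∀ x, ‖f x‖ * ‖g‖ ≤ C * ‖x‖ := fun x => by
    have := opNorm_le_bound ((‖f x‖ : 𝕜) • g) (M := C * ‖x‖) (by positivity) fun y => by
      rw [_root_.smul_apply, norm_smul, RCLike.norm_ofReal, abs_norm]
      exact h x y
    rwa [norm_smul, RCLike.norm_ofReal, abs_norm] at this
  have := opNorm_le_bound ((‖g‖ : 𝕜) • f) hC fun x => by
    rw [_root_.smul_apply, norm_smul, RCLike.norm_ofReal, abs_norm, mul_comm]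
    exact hg x
  rwa [norm_smul, RCLike.norm_ofReal, abs_norm, mul_comm] at this

section Kronecker

open WithLp

variable {α β γ : Type*} [Fintype α] [Fintype β] [Fintype γ]

lemma EuclideanSpace.norm_toLp_mul_comp_equiv (e : γ ≃ α × β) (u : α → ℂ) (v : β → ℂ) :
    ‖toLp 2 ((fun p : α × β => u p.1 * v p.2) ∘ e)‖ = ‖toLp 2 u‖ * ‖toLp 2 v‖ := by
  simp only [EuclideanSpace.norm_eq, Function.comp_apply, norm_mul, mul_pow]
  rw [← Real.sqrt_mul (by positivity), Fintype.sum_mul_sum, ← Fintype.sum_prod_type',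
    e.sum_comp (fun p : α × β => ‖u p.1‖ ^ 2 * ‖v p.2‖ ^ 2)]

lemma kronecker_submatrix_mulVec_mul_comp_equiv (e : γ ≃ α × β) (A : Matrix α α ℂ)
    (B : Matrix β β ℂ) (u : α → ℂ) (v : β → ℂ) :
    (A ⊗ₖ B).submatrix e e *ᵥ ((fun p : α × β => u p.1 * v p.2) ∘ e) =
      (fun p : α × β => (A *ᵥ u) p.1 * (B *ᵥ v) p.2) ∘ e := by
  rw [submatrix_mulVec_equiv, Function.comp_assoc, e.self_comp_symm, Function.comp_id]
  ext g
  simp only [Function.comp_apply, mulVec, dotProduct, Fintype.sum_mul_sum,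
    Fintype.sum_prod_type, kroneckerMap_apply]
  exact Finset.sum_congr rfl fun _ _ => Finset.sum_congr rfl fun _ _ => by ring

variable [DecidableEq α] [DecidableEq β] [DecidableEq γ]

lemma opNorm_mul_le_opNorm_kronecker_submatrix (e : γ ≃ α × β) (A : Matrix α α ℂ)
    (B : Matrix β β ℂ) : opNorm A * opNorm B ≤ opNorm ((A ⊗ₖ B).submatrix e e) := by
  refine ContinuousLinearMap.norm_mul_norm_le_of_forall _ _ (norm_nonneg _) fun x y => ?_
  have hM := (toEuclideanCLM (𝕜 := ℂ) ((A ⊗ₖ B).submatrix e e)).le_opNorm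
    (toLp 2 ((fun p : α × β => ofLp x p.1 * ofLp y p.2) ∘ e))
  rw [toEuclideanCLM_toLp, kronecker_submatrix_mulVec_mul_comp_equiv,
    EuclideanSpace.norm_toLp_mul_comp_equiv, EuclideanSpace.norm_toLp_mul_comp_equiv,
    ← toEuclideanCLM_toLp A, ← toEuclideanCLM_toLp B] at hM
  simpa only [opNorm, toLp_ofLp, mul_assoc] using hM

end Kronecker

lemma opNorm_nonneg {A : Type*} [Fintype A] [DecidableEq A] (M : Matrix A A ℂ) :
    0 ≤ opNorm M :=
  norm_nonneg _

lemma opNorm_pos_of_trace_ne_zero {A : Type*} [Fintype A] [DecidableEq A] {M : Matrix A A ℂ}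
    (h : M.trace ≠ 0) : 0 < opNorm M := by
  refine norm_pos_iff.mpr fun hM => h ?_
  rw [← map_zero (toEuclideanCLM (n := A) (𝕜 := ℂ))] at hM
  rw [toEuclideanCLM.injective hM, trace_zero]

lemma trace_ptraceFst {N K : Type*} [Fintype N] [Fintype K] (M : Matrix (N × K) (N × K) ℂ) :
    (ptraceFst M).trace = M.trace := by
  simp [ptraceFst, trace, Fintype.sum_prod_type, Finset.sum_comm (γ := N)]

lemma trace_ptraceSnd {N K : Type*} [Fintype N] [Fintype K] (M : Matrix (N × K) (N × K) ℂ) :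
    (ptraceSnd M).trace = M.trace := by
  simp [ptraceSnd, trace, Fintype.sum_prod_type]

lemma trace_ptranspose {B Q : Type*} [Fintype B] [Fintype Q] (M : Matrix (B × Q) (B × Q) ℂ) :
    (ptranspose M).trace = M.trace :=
  rfl

lemma trace_choiMatrix_of_forall_trace_eq {A B : Type*} [Fintype A] [DecidableEq A] [Fintype B]
    {L : Matrix A A ℂ →ₗ[ℂ] Matrix B B ℂ} (hL : ∀ X, (L X).trace = X.trace) :
    (choiMatrix L).trace = Fintype.card A := by
  simp only [choiMatrix, trace_sum, trace_kronecker, hL]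
  rw [← Finset.card_univ, Finset.cast_card]
  refine Finset.sum_congr rfl fun a _ => ?_
  rw [Finset.sum_eq_single a (fun b _ hb => by rw [trace_single_eq_of_ne _ _ _ hb.symm, mul_zero])
    (by simp), trace_single_eq_same, mul_one]

lemma choiMatrix_apply {A B : Type*} [Fintype A] [DecidableEq A]
    (L : Matrix A A ℂ →ₗ[ℂ] Matrix B B ℂ) (x y : B × A) :
    choiMatrix L x y = L (single x.2 y.2 1) x.1 y.1 := by
  simp [choiMatrix, Matrix.sum_apply, kroneckerMap_apply, single, ite_and]

lemma choiMatrix_eq_kronecker_submatrix {A B C D : Type*} [Fintype A] [DecidableEq A]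
    [Fintype C] [DecidableEq C]
    (L : Matrix A A ℂ →ₗ[ℂ] Matrix B B ℂ) (K : Matrix C C ℂ →ₗ[ℂ] Matrix D D ℂ)
    (M : Matrix (A × C) (A × C) ℂ →ₗ[ℂ] Matrix (B × D) (B × D) ℂ)
    (hM : ∀ X Y, M (X ⊗ₖ Y) = L X ⊗ₖ K Y) :
    choiMatrix M = (choiMatrix L ⊗ₖ choiMatrix K).submatrix (Equiv.prodProdProdComm B D A C)
        (Equiv.prodProdProdComm B D A C) := by
  ext x y
  rw [choiMatrix_apply, ← one_mul (1 : ℂ), ← single_kronecker_single, hM]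
  simp [choiMatrix_apply]

lemma ptranspose_kronecker_submatrix {A B C D : Type*} (M : Matrix (A × C) (A × C) ℂ)
    (M' : Matrix (B × D) (B × D) ℂ) :
    ptranspose ((M ⊗ₖ M').submatrix (Equiv.prodProdProdComm A B C D)
        (Equiv.prodProdProdComm A B C D)) =
      (ptranspose M ⊗ₖ ptranspose M').submatrix (Equiv.prodProdProdComm A B C D)
        (Equiv.prodProdProdComm A B C D) :=
  rfl

lemma ptraceFst_kronecker_submatrix {N₁ K₁ N₂ K₂ : Type*} [Fintype N₁] [Fintype N₂]
    (M : Matrix (N₁ × K₁) (N₁ × K₁) ℂ) (M' : Matrix (N₂ × K₂) (N₂ × K₂) ℂ) :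
    ptraceFst ((M ⊗ₖ M').submatrix (Equiv.prodProdProdComm N₁ N₂ K₁ K₂)
        (Equiv.prodProdProdComm N₁ N₂ K₁ K₂)) = ptraceFst M ⊗ₖ ptraceFst M' := by
  ext i j
  simp [ptraceFst, Fintype.sum_prod_type, Finset.sum_mul_sum]

lemma ptraceSnd_kronecker_submatrix {N₁ K₁ N₂ K₂ : Type*} [Fintype K₁] [Fintype K₂]
    (M : Matrix (N₁ × K₁) (N₁ × K₁) ℂ) (M' : Matrix (N₂ × K₂) (N₂ × K₂) ℂ) :
    ptraceSnd ((M ⊗ₖ M').submatrix (Equiv.prodProdProdComm N₁ N₂ K₁ K₂)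
        (Equiv.prodProdProdComm N₁ N₂ K₁ K₂)) = ptraceSnd M ⊗ₖ ptraceSnd M' := by
  ext i j
  simp [ptraceSnd, Fintype.sum_prod_type, Finset.sum_mul_sum]

section Isometry

variable {N K D : Type*} [Fintype N] [Fintype K] [Fintype D] [DecidableEq D]

lemma trace_mul_mul_conjTranspose_of_isometry {V : Matrix (N × K) D ℂ} (hV : Vᴴ * V = 1)
    (X : Matrix D D ℂ) : (V * X * Vᴴ).trace = X.trace := by
  rw [trace_mul_comm, ← Matrix.mul_assoc, hV, Matrix.one_mul]

lemma trace_channelOfIsometry {V : Matrix (N × K) D ℂ} (hV : Vᴴ * V = 1) (X : Matrix D D ℂ) :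
    (channelOfIsometry V X).trace = X.trace :=
  (trace_ptraceFst _).trans (trace_mul_mul_conjTranspose_of_isometry hV X)

lemma trace_compChannelOfIsometry {V : Matrix (N × K) D ℂ} (hV : Vᴴ * V = 1)
    (X : Matrix D D ℂ) : (compChannelOfIsometry V X).trace = X.trace :=
  (trace_ptraceSnd _).trans (trace_mul_mul_conjTranspose_of_isometry hV X)

end Isometry

section IsometryTensor

variable {N₁ K₁ D₁ N₂ K₂ D₂ : Type*}

lemma isometryTensor_eq_submatrix (V : Matrix (N₁ × K₁) D₁ ℂ) (W : Matrix (N₂ × K₂) D₂ ℂ) :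
    isometryTensor V W = (V ⊗ₖ W).submatrix (Equiv.prodProdProdComm N₁ N₂ K₁ K₂) id :=
  rfl

variable [Fintype D₁] [Fintype D₂] (V : Matrix (N₁ × K₁) D₁ ℂ) (W : Matrix (N₂ × K₂) D₂ ℂ)

lemma isometryTensor_mul_kronecker_mul_conjTranspose (X : Matrix D₁ D₁ ℂ) (Y : Matrix D₂ D₂ ℂ) :
    isometryTensor V W * (X ⊗ₖ Y) * (isometryTensor V W)ᴴ =
      ((V * X * Vᴴ) ⊗ₖ (W * Y * Wᴴ)).submatrix (Equiv.prodProdProdComm N₁ N₂ K₁ K₂)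
        (Equiv.prodProdProdComm N₁ N₂ K₁ K₂) := by
  rw [isometryTensor_eq_submatrix, conjTranspose_submatrix, mul_kronecker_mul, mul_kronecker_mul,
    conjTranspose_kronecker, submatrix_mul _ _ _ _ _ Function.bijective_id,
    submatrix_mul _ _ _ _ _ Function.bijective_id]
  simp

lemma isometryTensor_mul_conjTranspose [DecidableEq D₁] [DecidableEq D₂] :
    isometryTensor V W * (isometryTensor V W)ᴴ =
      ((V * Vᴴ) ⊗ₖ (W * Wᴴ)).submatrix (Equiv.prodProdProdComm N₁ N₂ K₁ K₂)
        (Equiv.prodProdProdComm N₁ N₂ K₁ K₂) := by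
  simpa using isometryTensor_mul_kronecker_mul_conjTranspose V W 1 1

variable [Fintype N₁] [Fintype K₁] [Fintype N₂] [Fintype K₂]

lemma channelOfIsometry_isometryTensor_kronecker (X : Matrix D₁ D₁ ℂ) (Y : Matrix D₂ D₂ ℂ) :
    channelOfIsometry (isometryTensor V W) (X ⊗ₖ Y) =
      channelOfIsometry V X ⊗ₖ channelOfIsometry W Y :=
  (congrArg ptraceFst (isometryTensor_mul_kronecker_mul_conjTranspose V W X Y)).trans
    (ptraceFst_kronecker_submatrix _ _)

lemma compChannelOfIsometry_isometryTensor_kronecker (X : Matrix D₁ D₁ ℂ)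
    (Y : Matrix D₂ D₂ ℂ) :
    compChannelOfIsometry (isometryTensor V W) (X ⊗ₖ Y) =
      compChannelOfIsometry V X ⊗ₖ compChannelOfIsometry W Y :=
  (congrArg ptraceSnd (isometryTensor_mul_kronecker_mul_conjTranspose V W X Y)).trans
    (ptraceSnd_kronecker_submatrix _ _)

end IsometryTensor

lemma nonempty_of_minOutputEntropy_pos {A B : Type*} [Fintype A] [Fintype B] [DecidableEq B]
    {p : ℝ≥0∞} {L : Matrix A A ℂ →ₗ[ℂ] Matrix B B ℂ} (h : 0 < minOutputEntropy p L) :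
    Nonempty A := by
  by_contra hA
  have : IsEmpty {X : Matrix A A ℂ // IsState X} :=
    ⟨fun X => by simpa [not_nonempty_iff.mp hA, trace] using X.2.2⟩
  exact h.ne' (Real.iInf_of_isEmpty _)

section AdditiveBound

variable {N K D : Type*} [Fintype N] [DecidableEq N] [Fintype K] [DecidableEq K] [Fintype D]
  [DecidableEq D]

/-- `B_M` in the notation of the paper. -/
def additiveBound (V : Matrix (N × K) D ℂ) : ℝ :=
  min (min (min (min
      (opNorm (choiMatrix (channelOfIsometry V)))
      (opNorm (ptranspose (choiMatrix (channelOfIsometry V)))))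
      (opNorm (ptranspose (choiMatrix (compChannelOfIsometry V)))))
      (opNorm (ptranspose (V * Vᴴ))))
    (opNorm (channelOfIsometry V 1))

lemma hatAlpha_eq (p : ℝ≥0∞) (V : Matrix (N × K) D ℂ) :
    hatAlpha p V = -Real.log (additiveBound V) / minOutputEntropy p (channelOfIsometry V) :=
  rfl

lemma additiveBound_nonneg (V : Matrix (N × K) D ℂ) : 0 ≤ additiveBound V :=
  le_min (le_min (le_min (le_min (opNorm_nonneg _) (opNorm_nonneg _)) (opNorm_nonneg _))
    (opNorm_nonneg _)) (opNorm_nonneg _)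

lemma additiveBound_pos [Nonempty D] {V : Matrix (N × K) D ℂ} (hV : Vᴴ * V = 1) :
    0 < additiveBound V := by
  have hD : (Fintype.card D : ℂ) ≠ 0 := Nat.cast_ne_zero.mpr Fintype.card_ne_zero
  have hchoi := trace_choiMatrix_of_forall_trace_eq (trace_channelOfIsometry hV)
  have hcomp := trace_choiMatrix_of_forall_trace_eq (trace_compChannelOfIsometry hV)
  have hproj : (V * Vᴴ).trace = Fintype.card D := by
    rw [trace_mul_comm, hV, trace_one]
  have hone : (channelOfIsometry V 1).trace = Fintype.card D := by
    rw [trace_channelOfIsometry hV, trace_one]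
  refine lt_min (lt_min (lt_min (lt_min ?_ ?_) ?_) ?_) ?_ <;>
    refine opNorm_pos_of_trace_ne_zero ?_
  · rwa [hchoi]
  · rwa [trace_ptranspose, hchoi]
  · rwa [trace_ptranspose, hcomp]
  · rwa [trace_ptranspose, hproj]
  · rwa [hone]

end AdditiveBound

lemma additiveBound_mul_le_additiveBound_isometryTensor {N₁ K₁ D₁ N₂ K₂ D₂ : Type*}
    [Fintype N₁] [DecidableEq N₁] [Fintype K₁] [DecidableEq K₁] [Fintype D₁] [DecidableEq D₁]
    [Fintype N₂] [DecidableEq N₂] [Fintype K₂] [DecidableEq K₂] [Fintype D₂] [DecidableEq D₂]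
    (V : Matrix (N₁ × K₁) D₁ ℂ) (W : Matrix (N₂ × K₂) D₂ ℂ) :
    additiveBound V * additiveBound W ≤ additiveBound (isometryTensor V W) := by
  have hchoi := choiMatrix_eq_kronecker_submatrix _ _ _
    (channelOfIsometry_isometryTensor_kronecker V W)
  have hcomp := choiMatrix_eq_kronecker_submatrix _ _ _
    (compChannelOfIsometry_isometryTensor_kronecker V W)
  have hone : channelOfIsometry (isometryTensor V W) 1 =
      (channelOfIsometry V 1 ⊗ₖ channelOfIsometry W 1).submatrix (Equiv.refl _) (Equiv.refl _) := by
    rw [← one_kronecker_one, channelOfIsometry_isometryTensor_kronecker]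
    rfl
  have c1 : opNorm (choiMatrix (channelOfIsometry V)) * opNorm (choiMatrix (channelOfIsometry W))
      ≤ opNorm (choiMatrix (channelOfIsometry (isometryTensor V W))) := by
    rw [hchoi]
    exact opNorm_mul_le_opNorm_kronecker_submatrix _ _ _
  have c2 : opNorm (ptranspose (choiMatrix (channelOfIsometry V))) *
        opNorm (ptranspose (choiMatrix (channelOfIsometry W)))
      ≤ opNorm (ptranspose (choiMatrix (channelOfIsometry (isometryTensor V W)))) := by
    rw [hchoi, ptranspose_kronecker_submatrix]
    exact opNorm_mul_le_opNorm_kronecker_submatrix _ _ _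
  have c3 : opNorm (ptranspose (choiMatrix (compChannelOfIsometry V))) *
        opNorm (ptranspose (choiMatrix (compChannelOfIsometry W)))
      ≤ opNorm (ptranspose (choiMatrix (compChannelOfIsometry (isometryTensor V W)))) := by
    rw [hcomp, ptranspose_kronecker_submatrix]
    exact opNorm_mul_le_opNorm_kronecker_submatrix _ _ _
  have c4 : opNorm (ptranspose (V * Vᴴ)) * opNorm (ptranspose (W * Wᴴ))
      ≤ opNorm (ptranspose (isometryTensor V W * (isometryTensor V W)ᴴ)) := by
    rw [isometryTensor_mul_conjTranspose, ptranspose_kronecker_submatrix]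
    exact opNorm_mul_le_opNorm_kronecker_submatrix _ _ _
  have c5 : opNorm (channelOfIsometry V 1) * opNorm (channelOfIsometry W 1)
      ≤ opNorm (channelOfIsometry (isometryTensor V W) 1) := by
    rw [hone]
    exact opNorm_mul_le_opNorm_kronecker_submatrix _ _ _
  have key {a b c : ℝ} (ha : additiveBound V ≤ a) (hb : additiveBound W ≤ b) (h : a * b ≤ c) :
      additiveBound V * additiveBound W ≤ c :=
    (mul_le_mul ha hb (additiveBound_nonneg W) ((additiveBound_nonneg V).trans ha)).trans h
  refine le_min (le_min (le_min (le_min (key ?_ ?_ c1) (key ?_ ?_ c2)) (key ?_ ?_ c3))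
    (key ?_ ?_ c4)) (key ?_ ?_ c5) <;> simp [additiveBound]

theorem hatAlpha_tensor_le_general {N₁ K₁ D₁ N₂ K₂ D₂ : Type*}
    [Fintype N₁] [DecidableEq N₁] [Fintype K₁] [DecidableEq K₁]
    [Fintype D₁] [DecidableEq D₁]
    [Fintype N₂] [DecidableEq N₂] [Fintype K₂] [DecidableEq K₂]
    [Fintype D₂] [DecidableEq D₂]
    (V : Matrix (N₁ × K₁) D₁ ℂ) (W : Matrix (N₂ × K₂) D₂ ℂ)
    (hV : Vᴴ * V = 1) (hW : Wᴴ * W = 1) (p : ℝ≥0∞)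
    (hHL : 0 < minOutputEntropy p (channelOfIsometry V))
    (hHK : 0 < minOutputEntropy p (channelOfIsometry W))
    (hHLK : 0 < minOutputEntropy p (channelOfIsometry (isometryTensor V W))) :
    hatAlpha p (isometryTensor V W) ≤
      ((minOutputEntropy p (channelOfIsometry V) +
            minOutputEntropy p (channelOfIsometry W)) /
          minOutputEntropy p (channelOfIsometry (isometryTensor V W))) *
        ((minOutputEntropy p (channelOfIsometry V) /
              (minOutputEntropy p (channelOfIsometry V) +
                minOutputEntropy p (channelOfIsometry W))) * hatAlpha p V +
          (1 - minOutputEntropy p (channelOfIsometry V) /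
              (minOutputEntropy p (channelOfIsometry V) +
                minOutputEntropy p (channelOfIsometry W))) * hatAlpha p W) := by
  have : Nonempty D₁ := nonempty_of_minOutputEntropy_pos hHL
  have : Nonempty D₂ := nonempty_of_minOutputEntropy_pos hHK
  have hBV := additiveBound_pos hV
  have hBW := additiveBound_pos hW
  have hlog : Real.log (additiveBound V) + Real.log (additiveBound W) ≤
      Real.log (additiveBound (isometryTensor V W)) := by
    rw [← Real.log_mul hBV.ne' hBW.ne']
    exact Real.log_le_log (mul_pos hBV hBW)
      (additiveBound_mul_le_additiveBound_isometryTensor V W)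
  rw [hatAlpha_eq, hatAlpha_eq, hatAlpha_eq]
  calc _ ≤ (-Real.log (additiveBound V) - Real.log (additiveBound W)) /
        minOutputEntropy p (channelOfIsometry (isometryTensor V W)) := by
        gcongr
        linarith
    _ = _ := by
        field_simp
        ring

/-- convex-like behaviour of the lower bounds α̂_p with respect to tensor
products: α̂_p(L⊗K) ≤ v_p(L,K)·[t·α̂_p(L) + (1−t)·α̂_p(K)]. -/
theorem hatAlpha_tensor_le {N₁ K₁ D₁ N₂ K₂ D₂ : Type*}
    [Fintype N₁] [DecidableEq N₁] [Fintype K₁] [DecidableEq K₁]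
    [Fintype D₁] [DecidableEq D₁]
    [Fintype N₂] [DecidableEq N₂] [Fintype K₂] [DecidableEq K₂]
    [Fintype D₂] [DecidableEq D₂]
    (V : Matrix (N₁ × K₁) D₁ ℂ) (W : Matrix (N₂ × K₂) D₂ ℂ)
    (hV : Vᴴ * V = 1) (hW : Wᴴ * W = 1) (p : ℝ≥0∞) (hp : p ≤ 2)
    (hHL : 0 < minOutputEntropy p (channelOfIsometry V))
    (hHK : 0 < minOutputEntropy p (channelOfIsometry W))
    (hHLK : 0 < minOutputEntropy p (channelOfIsometry (isometryTensor V W))) :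
    hatAlpha p (isometryTensor V W) ≤
      ((minOutputEntropy p (channelOfIsometry V) +
            minOutputEntropy p (channelOfIsometry W)) /
          minOutputEntropy p (channelOfIsometry (isometryTensor V W))) *
        ((minOutputEntropy p (channelOfIsometry V) /
              (minOutputEntropy p (channelOfIsometry V) +
                minOutputEntropy p (channelOfIsometry W))) * hatAlpha p V +
          (1 - minOutputEntropy p (channelOfIsometry V) /
              (minOutputEntropy p (channelOfIsometry V) +
                minOutputEntropy p (channelOfIsometry W))) * hatAlpha p W) :=
  hatAlpha_tensor_le_general V W hV hW p hHL hHK hHLK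

end
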